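/- arXiv:2203.09841 — 5 statements merged into one kernel-verified Lean document; each statement's English description precedes it below -/
import Mathlib

section
/- Let U : [0, T] → (ℝ^d)^J be a continuously differentiable solution of the ensemble Kalman particle dynamics. Then the ensemble mean m(t) := (1/J) Σ_{j=1}^J u^j(t) is continuously differentiable and satisfies the closed first-moment equation d/dt m(t) = C(U(t)) Gᵀ Γ^{-1} (y − G m(t)). -/
/-!
The mean `Ū` is linear in the ensemble and the velocity field `uʲ ↦ C(U) Gᵀ Γ⁻¹ (y − G uʲ)`
is affine in the particle with a coefficient `C(U)` shared by all particles, so averaging the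
particle equations gives the same field evaluated at the mean.
-/

open Matrix Set

attribute [local instance] Matrix.normedAddCommGroup Matrix.normedSpace

/-- The sample mean `Ū = (1/J) ∑ⱼ uʲ` of an ensemble `U ∈ (ℝ^d)^J`. -/
noncomputable def sampleMean {d J : ℕ} (U : Fin J → Fin d → ℝ) : Fin d → ℝ :=
  (J : ℝ)⁻¹ • ∑ j, U j

/-- The sample covariance `C(U) = (1/J) ∑ⱼ (uʲ − Ū) ⊗ (uʲ − Ū)`. -/
noncomputable def sampleCov {d J : ℕ} (U : Fin J → Fin d → ℝ) :
    Matrix (Fin d) (Fin d) ℝ :=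
  (J : ℝ)⁻¹ • ∑ j, vecMulVec (U j - sampleMean U) (U j - sampleMean U)

/-- Right-hand side of the ensemble Kalman particle dynamics:
`(d/dt) uʲ = C(U) Gᵀ Γ⁻¹ (y − G uʲ)`. -/
noncomputable def enkfRHS {d k J : ℕ} (G : Matrix (Fin k) (Fin d) ℝ)
    (Γ : Matrix (Fin k) (Fin k) ℝ) (y : Fin k → ℝ) (U : Fin J → Fin d → ℝ) :
    Fin J → Fin d → ℝ :=
  fun j => (sampleCov U * Gᵀ * Γ⁻¹).mulVec (y - G.mulVec (U j))

section SampleMean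

variable {d J : ℕ}

theorem sampleMean_const (hJ : J ≠ 0) (v : Fin d → ℝ) :
    sampleMean (fun _ : Fin J => v) = v := by
  have hJ' : (J : ℝ) ≠ 0 := Nat.cast_ne_zero.mpr hJ
  simp only [sampleMean, Finset.sum_const, Finset.card_univ, Fintype.card_fin,
    ← Nat.cast_smul_eq_nsmul ℝ, smul_smul, inv_mul_cancel₀ hJ', one_smul]

theorem sampleMean_sub (U V : Fin J → Fin d → ℝ) :
    sampleMean (fun j => U j - V j) = sampleMean U - sampleMean V := by
  simp only [sampleMean, Finset.sum_sub_distrib, smul_sub]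

theorem sampleMean_mulVec {n : ℕ} (A : Matrix (Fin n) (Fin d) ℝ) (U : Fin J → Fin d → ℝ) :
    sampleMean (fun j => A *ᵥ U j) = A *ᵥ sampleMean U := by
  simp only [sampleMean, mulVec_smul, mulVec_sum]

theorem HasDerivWithinAt.sampleMean {U : ℝ → Fin J → Fin d → ℝ} {U' : Fin J → Fin d → ℝ}
    {s : Set ℝ} {t : ℝ} (hU : HasDerivWithinAt U U' s t) :
    HasDerivWithinAt (fun τ => sampleMean (U τ)) (sampleMean U') s t :=
  (HasDerivWithinAt.fun_sum fun j _ => hasDerivWithinAt_pi.mp hU j).const_smul (J : ℝ)⁻¹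

end SampleMean

theorem sampleMean_enkfRHS {d k J : ℕ} (hJ : J ≠ 0) (G : Matrix (Fin k) (Fin d) ℝ)
    (Γ : Matrix (Fin k) (Fin k) ℝ) (y : Fin k → ℝ) (U : Fin J → Fin d → ℝ) :
    sampleMean (enkfRHS G Γ y U) =
      (sampleCov U * Gᵀ * Γ⁻¹) *ᵥ (y - G *ᵥ sampleMean U) := by
  change sampleMean (fun j => _ *ᵥ (y - G *ᵥ U j)) = _
  rw [sampleMean_mulVec, sampleMean_sub, sampleMean_const hJ, sampleMean_mulVec]

theorem enkf_mean_equation_general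
    {d k J : ℕ} (hJ : 1 ≤ J)
    (G : Matrix (Fin k) (Fin d) ℝ) (Γ : Matrix (Fin k) (Fin k) ℝ)
    (y : Fin k → ℝ)
    (T : ℝ) (U : ℝ → Fin J → Fin d → ℝ)
    (hU : ∀ t ∈ Icc (0 : ℝ) T, HasDerivWithinAt U (enkfRHS G Γ y (U t)) (Icc 0 T) t) :
    ∀ t ∈ Icc (0 : ℝ) T,
      HasDerivWithinAt (fun s => sampleMean (U s))
        ((sampleCov (U t) * Gᵀ * Γ⁻¹).mulVec (y - G.mulVec (sampleMean (U t))))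
        (Icc 0 T) t := by
  intro t ht
  rw [← sampleMean_enkfRHS (by omega)]
  exact (hU t ht).sampleMean

theorem enkf_mean_equation
    {d k J : ℕ} (hd : 1 ≤ d) (hk : 1 ≤ k) (hJ : 1 ≤ J)
    (G : Matrix (Fin k) (Fin d) ℝ) (Γ : Matrix (Fin k) (Fin k) ℝ)
    (hΓ : Γ.PosDef) (y : Fin k → ℝ)
    (T : ℝ) (hT : 0 < T) (U : ℝ → Fin J → Fin d → ℝ)
    (hU : ∀ t ∈ Icc (0 : ℝ) T, HasDerivWithinAt U (enkfRHS G Γ y (U t)) (Icc 0 T) t) :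
    ∀ t ∈ Icc (0 : ℝ) T,
      HasDerivWithinAt (fun s => sampleMean (U s))
        ((sampleCov (U t) * Gᵀ * Γ⁻¹).mulVec (y - G.mulVec (sampleMean (U t))))
        (Icc 0 T) t :=
  enkf_mean_equation_general hJ G Γ y T U hU
end

section
/- Let U : [0, T] → (ℝ^d)^J be a continuously differentiable solution of the ensemble Kalman particle dynamics, and set m(t) := (1/J) Σ_{j=1}^J u^j(t) and E(t) := (1/J) Σ_{j=1}^J u^j(t) ⊗ u^j(t). Then E is continuously differentiable and satisfies the second-moment equation d/dt E(t) = C(U(t)) Gᵀ Γ^{-1} (y ⊗ m(t) − G E(t)) + [C(U(t)) Gᵀ Γ^{-1} (y ⊗ m(t) − G E(t))]ᵀ, where y ⊗ m denotes the k×d matrix y mᵀ. -/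
/-!
Differentiating `E = (1/J) ∑ⱼ uʲ ⊗ uʲ` by the product rule gives `M + Mᵀ` with the cross
moment `M = (1/J) ∑ⱼ u̇ʲ ⊗ uʲ`. Since every velocity `u̇ʲ = A (y − G uʲ)` with the same matrix
`A = C(U) Gᵀ Γ⁻¹`, the cross moment is affine in the first two empirical moments:
`M = A (y ⊗ m − G E)`.
-/

open Matrix Set

attribute [local instance] Matrix.normedAddCommGroup Matrix.normedSpace

/-- The second moment `E(U) = (1/J) ∑ⱼ uʲ ⊗ uʲ`. -/
noncomputable def secondMoment {d J : ℕ} (U : Fin J → Fin d → ℝ) :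
    Matrix (Fin d) (Fin d) ℝ :=
  (J : ℝ)⁻¹ • ∑ j, vecMulVec (U j) (U j)

theorem HasDerivWithinAt.matrix_vecMulVec {m n : Type*} [Fintype m] [Fintype n]
    {u : ℝ → m → ℝ} {v : ℝ → n → ℝ} {u' : m → ℝ} {v' : n → ℝ} {s : Set ℝ} {t : ℝ}
    (hu : HasDerivWithinAt u u' s t) (hv : HasDerivWithinAt v v' s t) :
    HasDerivWithinAt (fun r => vecMulVec (u r) (v r))
      (vecMulVec u' (v t) + vecMulVec (u t) v') s t :=
  hasDerivWithinAt_pi.mpr fun i => hasDerivWithinAt_pi.mpr fun j =>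
    (hasDerivWithinAt_pi.mp hu i).mul (hasDerivWithinAt_pi.mp hv j)

noncomputable def crossMoment {m n : Type*} {J : ℕ} (V : Fin J → m → ℝ) (W : Fin J → n → ℝ) :
    Matrix m n ℝ :=
  (J : ℝ)⁻¹ • ∑ j, vecMulVec (V j) (W j)

theorem transpose_crossMoment {m n : Type*} {J : ℕ} (V : Fin J → m → ℝ) (W : Fin J → n → ℝ) :
    (crossMoment V W)ᵀ = crossMoment W V := by
  simp only [crossMoment, transpose_smul, transpose_sum, transpose_vecMulVec]

theorem hasDerivWithinAt_secondMoment {d J : ℕ} {U : ℝ → Fin J → Fin d → ℝ}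
    {V : Fin J → Fin d → ℝ} {s : Set ℝ} {t : ℝ} (hU : HasDerivWithinAt U V s t) :
    HasDerivWithinAt (fun r => secondMoment (U r))
      (crossMoment V (U t) + (crossMoment V (U t))ᵀ) s t := by
  have hUj : ∀ j, HasDerivWithinAt (fun r => U r j) (V j) s t := hasDerivWithinAt_pi.mp hU
  rw [transpose_crossMoment, crossMoment, crossMoment, ← smul_add, ← Finset.sum_add_distrib]
  exact (HasDerivWithinAt.fun_sum fun j _ => (hUj j).matrix_vecMulVec (hUj j)).const_smul
    (J : ℝ)⁻¹

theorem crossMoment_affine {d k J : ℕ} (A : Matrix (Fin d) (Fin k) ℝ)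
    (G : Matrix (Fin k) (Fin d) ℝ) (y : Fin k → ℝ) (U : Fin J → Fin d → ℝ) :
    crossMoment (fun j => A *ᵥ (y - G *ᵥ U j)) U
      = A * (vecMulVec y (sampleMean U) - G * secondMoment U) := by
  have hmean : vecMulVec y (sampleMean U) = (J : ℝ)⁻¹ • ∑ j, vecMulVec y (U j) := by
    ext a b
    simp only [sampleMean, vecMulVec_apply, Matrix.smul_apply, Matrix.sum_apply, Pi.smul_apply,
      Finset.sum_apply, smul_eq_mul, Finset.mul_sum]
    exact Finset.sum_congr rfl fun j _ => by ring
  simp only [crossMoment, secondMoment, hmean, ← mul_vecMulVec, sub_vecMulVec, Matrix.mul_smul,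
    Matrix.mul_sum, ← smul_sub, ← Finset.sum_sub_distrib, Matrix.mul_sub]

theorem enkf_second_moment_equation_general
    {d k J : ℕ}
    (G : Matrix (Fin k) (Fin d) ℝ) (Γ : Matrix (Fin k) (Fin k) ℝ)
    (y : Fin k → ℝ)
    (T : ℝ) (U : ℝ → Fin J → Fin d → ℝ)
    (hU : ∀ t ∈ Icc (0 : ℝ) T, HasDerivWithinAt U (enkfRHS G Γ y (U t)) (Icc 0 T) t) :
    ∀ t ∈ Icc (0 : ℝ) T,
      HasDerivWithinAt (fun s => secondMoment (U s))
        (sampleCov (U t) * Gᵀ * Γ⁻¹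
            * (vecMulVec y (sampleMean (U t)) - G * secondMoment (U t))
          + (sampleCov (U t) * Gᵀ * Γ⁻¹
            * (vecMulVec y (sampleMean (U t)) - G * secondMoment (U t)))ᵀ)
        (Icc 0 T) t := by
  intro t ht
  rw [← crossMoment_affine]
  exact hasDerivWithinAt_secondMoment (hU t ht)

theorem enkf_second_moment_equation
    {d k J : ℕ} (hd : 1 ≤ d) (hk : 1 ≤ k) (hJ : 1 ≤ J)
    (G : Matrix (Fin k) (Fin d) ℝ) (Γ : Matrix (Fin k) (Fin k) ℝ)
    (hΓ : Γ.PosDef) (y : Fin k → ℝ)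
    (T : ℝ) (hT : 0 < T) (U : ℝ → Fin J → Fin d → ℝ)
    (hU : ∀ t ∈ Icc (0 : ℝ) T, HasDerivWithinAt U (enkfRHS G Γ y (U t)) (Icc 0 T) t) :
    ∀ t ∈ Icc (0 : ℝ) T,
      HasDerivWithinAt (fun s => secondMoment (U s))
        (sampleCov (U t) * Gᵀ * Γ⁻¹
            * (vecMulVec y (sampleMean (U t)) - G * secondMoment (U t))
          + (sampleCov (U t) * Gᵀ * Γ⁻¹
            * (vecMulVec y (sampleMean (U t)) - G * secondMoment (U t)))ᵀ)
        (Icc 0 T) t :=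
  enkf_second_moment_equation_general G Γ y T U hU
end

section
/- Let O ⊆ ℝ^l be open and let m : O × [0, T] → ℝ^d and E : O × [0, T] → ℝ^{d×d} be continuously differentiable, with the mixed partial derivatives ∂_{λ_i} ∂_t E existing and satisfying ∂_{λ_i} ∂_t E = ∂_t ∂_{λ_i} E. Suppose that for every λ ∈ O the second-moment equation ∂_t E(λ, t) = C G(λ)ᵀ Γ^{-1} (y(λ) ⊗ m − G(λ) E) + [C G(λ)ᵀ Γ^{-1} (y(λ) ⊗ m − G(λ) E)]ᵀ holds, where C := E − m ⊗ m and y ⊗ m denotes the k×d matrix y mᵀ. Then, writing m_{λ_i} := ∂_{λ_i} m, E_{λ_i} := ∂_{λ_i} E and C̄_i := E_{λ_i} − m_{λ_i} ⊗ m − m ⊗ m_{λ_i}, the sensitivity E_{λ_i} satisfies ∂_t E_{λ_i} = C G(λ)ᵀ Γ^{-1} (y(λ) ⊗ m_{λ_i} − G(λ) E_{λ_i}) + C̄_i G(λ)ᵀ Γ^{-1} (y(λ) ⊗ m − G(λ) E) + C G_iᵀ Γ^{-1} (y(λ) ⊗ m − G(λ) E) + C G(λ)ᵀ Γ^{-1}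 (y_i ⊗ m − G_i E) + the transposes of these four terms. -/
/-!
Differentiate the second-moment equation in `λᵢ`. Its right-hand side is `A + Aᵀ` with
`A = C G(λ)ᵀ Γ⁻¹ (y(λ) ⊗ m − G(λ) E)`, and `G(λ)`, `y(λ)` are linear with partial derivatives
`Gᵢ`, `yᵢ`, so the product rule turns `∂_{λᵢ} A` into the four terms of the claim. As the
equation holds on the open set `O`, this is `∂_{λᵢ} ∂_t E`, which equals `∂_t E_{λᵢ}` by the
symmetry of mixed partials.
-/

open Matrix Set Function

attribute [local instance] Matrix.normedAddCommGroup Matrix.normedSpace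

/-- The weighted forward operator `G(λ) = ∑ᵢ λᵢ Gᵢ`. -/
noncomputable def Gw {d k l : ℕ} (G : Fin l → Matrix (Fin k) (Fin d) ℝ)
    (lam : Fin l → ℝ) : Matrix (Fin k) (Fin d) ℝ := ∑ i, lam i • G i

/-- The weighted observation `y(λ) = ∑ᵢ λᵢ yᵢ`. -/
noncomputable def yw {k l : ℕ} (y : Fin l → Fin k → ℝ) (lam : Fin l → ℝ) :
    Fin k → ℝ := ∑ i, lam i • y i

section MatrixCalculus

variable {𝕜 : Type*} [NontriviallyNormedField 𝕜] {m n p : Type*} {x : 𝕜}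

theorem HasDerivAt.matrixMul [Fintype n] [Fintype p] {A : 𝕜 → Matrix m n 𝕜}
    {B : 𝕜 → Matrix n p 𝕜} {A' : Matrix m n 𝕜} {B' : Matrix n p 𝕜} (hA : HasDerivAt A A' x)
    (hB : HasDerivAt B B' x) :
    HasDerivAt (fun x => A x * B x) (A' * B x + A x * B') x := by
  refine hasDerivAt_pi.2 fun i => hasDerivAt_pi.2 fun j => ?_
  simp only [mul_apply, Matrix.add_apply, ← Finset.sum_add_distrib]
  exact HasDerivAt.fun_sum fun c _ =>
    (hasDerivAt_pi.1 (hasDerivAt_pi.1 hA i) c).mul (hasDerivAt_pi.1 (hasDerivAt_pi.1 hB c) j)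

theorem HasDerivAt.vecMulVec [Fintype n] {u : 𝕜 → m → 𝕜} {v : 𝕜 → n → 𝕜} {u' : m → 𝕜}
    {v' : n → 𝕜} (hu : HasDerivAt u u' x) (hv : HasDerivAt v v' x) :
    HasDerivAt (fun x => vecMulVec (u x) (v x)) (vecMulVec u' (v x) + vecMulVec (u x) v') x :=
  hasDerivAt_pi.2 fun i => hasDerivAt_pi.2 fun j =>
    (hasDerivAt_pi.1 hu i).mul (hasDerivAt_pi.1 hv j)

theorem HasDerivAt.matrixTranspose [Fintype m] [Fintype n] {A : 𝕜 → Matrix m n 𝕜}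
    {A' : Matrix m n 𝕜} (hA : HasDerivAt A A' x) : HasDerivAt (fun x => (A x)ᵀ) A'ᵀ x :=
  hasDerivAt_pi.2 fun i => hasDerivAt_pi.2 fun j => hasDerivAt_pi.1 (hasDerivAt_pi.1 hA j) i

end MatrixCalculus

theorem hasDerivAt_sum_update_smul {𝕜 F ι : Type*} [NontriviallyNormedField 𝕜]
    [NormedAddCommGroup F] [NormedSpace 𝕜 F] [Fintype ι] [DecidableEq ι]
    (v : ι → F) (lam : ι → 𝕜) (i : ι) (s : 𝕜) :
    HasDerivAt (fun s => ∑ j, update lam i s j • v j) (v i) s := by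
  have h := HasDerivAt.fun_sum fun j (_ : j ∈ Finset.univ) =>
    (hasDerivAt_pi.1 (hasDerivAt_update lam i s) j).smul_const (v j)
  simpa [Pi.single_apply] using h

theorem hasDerivAt_momentGain {𝕜 : Type*} [NontriviallyNormedField 𝕜] {d k : Type*}
    [Fintype d] [Fintype k] {G : 𝕜 → Matrix k d 𝕜} {y : 𝕜 → k → 𝕜} {m : 𝕜 → d → 𝕜}
    {E : 𝕜 → Matrix d d 𝕜} {G' : Matrix k d 𝕜} {y' : k → 𝕜} {m' : d → 𝕜} {E' : Matrix d d 𝕜}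
    {x : 𝕜} (P : Matrix k k 𝕜) (hG : HasDerivAt G G' x) (hy : HasDerivAt y y' x)
    (hm : HasDerivAt m m' x) (hE : HasDerivAt E E' x) :
    HasDerivAt
      (fun x => (E x - vecMulVec (m x) (m x)) * (G x)ᵀ * P
        * (vecMulVec (y x) (m x) - G x * E x))
      ((E x - vecMulVec (m x) (m x)) * (G x)ᵀ * P * (vecMulVec (y x) m' - G x * E')
        + (E' - vecMulVec m' (m x) - vecMulVec (m x) m') * (G x)ᵀ * P
          * (vecMulVec (y x) (m x) - G x * E x)
        + (E x - vecMulVec (m x) (m x)) * G'ᵀ * P * (vecMulVec (y x) (m x) - G x * E x)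
        + (E x - vecMulVec (m x) (m x)) * (G x)ᵀ * P * (vecMulVec y' (m x) - G' * E x)) x := by
  have hC := hE.sub (hm.vecMulVec hm)
  have hV := (hy.vecMulVec hm).sub (hG.matrixMul hE)
  refine (((hC.matrixMul hG.matrixTranspose).matrixMul (hasDerivAt_const x P)).matrixMul
    hV).congr_deriv ?_
  simp only [Pi.sub_apply, Matrix.mul_zero, add_zero, Matrix.add_mul, Matrix.mul_add,
    Matrix.mul_sub, Matrix.sub_mul, sub_sub]
  abel

theorem second_moment_sensitivity_equation_general
    {d k l : ℕ}
    (G : Fin l → Matrix (Fin k) (Fin d) ℝ) (y : Fin l → Fin k → ℝ)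
    (Γ : Matrix (Fin k) (Fin k) ℝ)
    (O : Set (Fin l → ℝ)) (hO : IsOpen O) (T : ℝ)
    (m : (Fin l → ℝ) → ℝ → Fin d → ℝ)
    (E : (Fin l → ℝ) → ℝ → Matrix (Fin d) (Fin d) ℝ)
    (Et : (Fin l → ℝ) → ℝ → Matrix (Fin d) (Fin d) ℝ)
    (mlam : Fin l → (Fin l → ℝ) → ℝ → Fin d → ℝ)
    (Elam : Fin l → (Fin l → ℝ) → ℝ → Matrix (Fin d) (Fin d) ℝ)
    (Etlam : Fin l → (Fin l → ℝ) → ℝ → Matrix (Fin d) (Fin d) ℝ)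
    -- `mlam i`, `Elam i` are the partial derivatives of `m`, `E` with respect to `λᵢ`
    (hmlam : ∀ lam ∈ O, ∀ t ∈ Icc (0 : ℝ) T, ∀ i,
      HasDerivAt (fun s => m (update lam i s) t) (mlam i lam t) (lam i))
    (hElam : ∀ lam ∈ O, ∀ t ∈ Icc (0 : ℝ) T, ∀ i,
      HasDerivAt (fun s => E (update lam i s) t) (Elam i lam t) (lam i))
    -- the mixed partials `∂_{λᵢ} ∂_t E` exist and equal `∂_t ∂_{λᵢ} E` (both `= Etlam i`)
    (hmix : ∀ lam ∈ O, ∀ t ∈ Icc (0 : ℝ) T, ∀ i,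
      HasDerivAt (fun s => Et (update lam i s) t) (Etlam i lam t) (lam i) ∧
      HasDerivWithinAt (fun s => Elam i lam s) (Etlam i lam t) (Icc 0 T) t)
    -- the second-moment equation, with `C = E − m ⊗ m`
    (hmom : ∀ lam ∈ O, ∀ t ∈ Icc (0 : ℝ) T,
      Et lam t
        = (E lam t - vecMulVec (m lam t) (m lam t)) * (Gw G lam)ᵀ * Γ⁻¹
            * (vecMulVec (yw y lam) (m lam t) - Gw G lam * E lam t)
          + ((E lam t - vecMulVec (m lam t) (m lam t)) * (Gw G lam)ᵀ * Γ⁻¹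
            * (vecMulVec (yw y lam) (m lam t) - Gw G lam * E lam t))ᵀ) :
    -- conclusion: the sensitivity equation for `E_{λᵢ}`
    ∀ lam ∈ O, ∀ t ∈ Icc (0 : ℝ) T, ∀ i,
      HasDerivWithinAt (fun s => Elam i lam s)
        ((E lam t - vecMulVec (m lam t) (m lam t)) * (Gw G lam)ᵀ * Γ⁻¹
            * (vecMulVec (yw y lam) (mlam i lam t) - Gw G lam * Elam i lam t)
          + (Elam i lam t - vecMulVec (mlam i lam t) (m lam t)
              - vecMulVec (m lam t) (mlam i lam t)) * (Gw G lam)ᵀ * Γ⁻¹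
            * (vecMulVec (yw y lam) (m lam t) - Gw G lam * E lam t)
          + (E lam t - vecMulVec (m lam t) (m lam t)) * (G i)ᵀ * Γ⁻¹
            * (vecMulVec (yw y lam) (m lam t) - Gw G lam * E lam t)
          + (E lam t - vecMulVec (m lam t) (m lam t)) * (Gw G lam)ᵀ * Γ⁻¹
            * (vecMulVec (y i) (m lam t) - G i * E lam t)
          + ((E lam t - vecMulVec (m lam t) (m lam t)) * (Gw G lam)ᵀ * Γ⁻¹
            * (vecMulVec (yw y lam) (mlam i lam t) - Gw G lam * Elam i lam t))ᵀ
          + ((Elam i lam t - vecMulVec (mlam i lam t) (m lam t)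
              - vecMulVec (m lam t) (mlam i lam t)) * (Gw G lam)ᵀ * Γ⁻¹
            * (vecMulVec (yw y lam) (m lam t) - Gw G lam * E lam t))ᵀ
          + ((E lam t - vecMulVec (m lam t) (m lam t)) * (G i)ᵀ * Γ⁻¹
            * (vecMulVec (yw y lam) (m lam t) - Gw G lam * E lam t))ᵀ
          + ((E lam t - vecMulVec (m lam t) (m lam t)) * (Gw G lam)ᵀ * Γ⁻¹
            * (vecMulVec (y i) (m lam t) - G i * E lam t))ᵀ)
        (Icc 0 T) t := by
  intro lam hlam t ht i
  obtain ⟨hEt_lam, hElam_t⟩ := hmix lam hlam t ht i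
  have hGain := hasDerivAt_momentGain Γ⁻¹ (hasDerivAt_sum_update_smul G lam i (lam i))
    (hasDerivAt_sum_update_smul y lam i (lam i)) (hmlam lam hlam t ht i) (hElam lam hlam t ht i)
  simp only [update_eq_self] at hGain
  have hmem : ∀ᶠ s in nhds (lam i), update lam i s ∈ O :=
    (continuous_const.update i continuous_id).continuousAt.eventually_mem
      (hO.mem_nhds (by simpa using hlam))
  have hEtlam := hEt_lam.unique ((hGain.add hGain.matrixTranspose).congr_of_eventuallyEq
    (hmem.mono fun s hs => hmom _ hs t ht))
  convert hElam_t using 1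
  rw [hEtlam, transpose_add, transpose_add, transpose_add]
  abel

theorem second_moment_sensitivity_equation
    {d k l : ℕ} (hd : 1 ≤ d) (hk : 1 ≤ k) (hl : 1 ≤ l)
    (G : Fin l → Matrix (Fin k) (Fin d) ℝ) (y : Fin l → Fin k → ℝ)
    (Γ : Matrix (Fin k) (Fin k) ℝ) (hΓ : Γ.PosDef)
    (O : Set (Fin l → ℝ)) (hO : IsOpen O) (T : ℝ) (hT : 0 < T)
    (m : (Fin l → ℝ) → ℝ → Fin d → ℝ)
    (E : (Fin l → ℝ) → ℝ → Matrix (Fin d) (Fin d) ℝ)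
    (Et : (Fin l → ℝ) → ℝ → Matrix (Fin d) (Fin d) ℝ)
    (mlam : Fin l → (Fin l → ℝ) → ℝ → Fin d → ℝ)
    (Elam : Fin l → (Fin l → ℝ) → ℝ → Matrix (Fin d) (Fin d) ℝ)
    (Etlam : Fin l → (Fin l → ℝ) → ℝ → Matrix (Fin d) (Fin d) ℝ)
    -- `Et` is the time derivative of `E`
    (hEt : ∀ lam ∈ O, ∀ t ∈ Icc (0 : ℝ) T,
      HasDerivWithinAt (E lam) (Et lam t) (Icc 0 T) t)
    -- `mlam i`, `Elam i` are the partial derivatives of `m`, `E` with respect to `λᵢ`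
    (hmlam : ∀ lam ∈ O, ∀ t ∈ Icc (0 : ℝ) T, ∀ i,
      HasDerivAt (fun s => m (update lam i s) t) (mlam i lam t) (lam i))
    (hElam : ∀ lam ∈ O, ∀ t ∈ Icc (0 : ℝ) T, ∀ i,
      HasDerivAt (fun s => E (update lam i s) t) (Elam i lam t) (lam i))
    -- continuity of the partial derivatives (`m`, `E` continuously differentiable)
    (hEtc : ContinuousOn (fun p : (Fin l → ℝ) × ℝ => Et p.1 p.2) (O ×ˢ Icc 0 T))
    (hmlamc : ∀ i, ContinuousOn (fun p : (Fin l → ℝ) × ℝ => mlam i p.1 p.2) (O ×ˢ Icc 0 T))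
    (hElamc : ∀ i, ContinuousOn (fun p : (Fin l → ℝ) × ℝ => Elam i p.1 p.2) (O ×ˢ Icc 0 T))
    -- the mixed partials `∂_{λᵢ} ∂_t E` exist and equal `∂_t ∂_{λᵢ} E` (both `= Etlam i`)
    (hmix : ∀ lam ∈ O, ∀ t ∈ Icc (0 : ℝ) T, ∀ i,
      HasDerivAt (fun s => Et (update lam i s) t) (Etlam i lam t) (lam i) ∧
      HasDerivWithinAt (fun s => Elam i lam s) (Etlam i lam t) (Icc 0 T) t)
    -- the second-moment equation, with `C = E − m ⊗ m`
    (hmom : ∀ lam ∈ O, ∀ t ∈ Icc (0 : ℝ) T,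
      Et lam t
        = (E lam t - vecMulVec (m lam t) (m lam t)) * (Gw G lam)ᵀ * Γ⁻¹
            * (vecMulVec (yw y lam) (m lam t) - Gw G lam * E lam t)
          + ((E lam t - vecMulVec (m lam t) (m lam t)) * (Gw G lam)ᵀ * Γ⁻¹
            * (vecMulVec (yw y lam) (m lam t) - Gw G lam * E lam t))ᵀ) :
    -- conclusion: the sensitivity equation for `E_{λᵢ}`
    ∀ lam ∈ O, ∀ t ∈ Icc (0 : ℝ) T, ∀ i,
      HasDerivWithinAt (fun s => Elam i lam s)
        ((E lam t - vecMulVec (m lam t) (m lam t)) * (Gw G lam)ᵀ * Γ⁻¹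
            * (vecMulVec (yw y lam) (mlam i lam t) - Gw G lam * Elam i lam t)
          + (Elam i lam t - vecMulVec (mlam i lam t) (m lam t)
              - vecMulVec (m lam t) (mlam i lam t)) * (Gw G lam)ᵀ * Γ⁻¹
            * (vecMulVec (yw y lam) (m lam t) - Gw G lam * E lam t)
          + (E lam t - vecMulVec (m lam t) (m lam t)) * (G i)ᵀ * Γ⁻¹
            * (vecMulVec (yw y lam) (m lam t) - Gw G lam * E lam t)
          + (E lam t - vecMulVec (m lam t) (m lam t)) * (Gw G lam)ᵀ * Γ⁻¹
            * (vecMulVec (y i) (m lam t) - G i * E lam t)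
          + ((E lam t - vecMulVec (m lam t) (m lam t)) * (Gw G lam)ᵀ * Γ⁻¹
            * (vecMulVec (yw y lam) (mlam i lam t) - Gw G lam * Elam i lam t))ᵀ
          + ((Elam i lam t - vecMulVec (mlam i lam t) (m lam t)
              - vecMulVec (m lam t) (mlam i lam t)) * (Gw G lam)ᵀ * Γ⁻¹
            * (vecMulVec (yw y lam) (m lam t) - Gw G lam * E lam t))ᵀ
          + ((E lam t - vecMulVec (m lam t) (m lam t)) * (G i)ᵀ * Γ⁻¹
            * (vecMulVec (yw y lam) (m lam t) - Gw G lam * E lam t))ᵀ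
          + ((E lam t - vecMulVec (m lam t) (m lam t)) * (Gw G lam)ᵀ * Γ⁻¹
            * (vecMulVec (y i) (m lam t) - G i * E lam t))ᵀ)
        (Icc 0 T) t :=
  second_moment_sensitivity_equation_general G y Γ O hO T m E Et mlam Elam Etlam hmlam hElam hmix
    hmom
end

section
/- Let d = k = 1, fix λ ∈ ℝ^l, and write g := G(λ), γ := Γ > 0, y := y(λ), g_i := G_i, and assume g ≠ 0. A point (m, E, (m_{λ_i})_{i=1}^l, (E_{λ_i})_{i=1}^l) ∈ ℝ × ℝ × ℝ^l × ℝ^l is an equilibrium of the moment system (i.e., the right-hand sides of all 2 + 2l equations vanish) if and only if either (a) g m = y and g² E = y², or (b) E = m² and E_{λ_i} = 2 m m_{λ_i} for every i = 1, …, l. -/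
/-!
Equilibria of the one-dimensional (`d = k = 1`) moment system: with `g = G(λ) ≠ 0`,
`y = y(λ)`, `γ > 0`, a point `(m, E, (m_{λᵢ})ᵢ, (E_{λᵢ})ᵢ)` is an equilibrium of the
moment system if and only if either `g m = y` and `g² E = y²`, or `E = m²` and
`E_{λᵢ} = 2 m m_{λᵢ}` for every `i`.
-/

/-- `G(λ) = ∑ᵢ λᵢ Gᵢ` in the scalar case. -/
noncomputable def Gs {l : ℕ} (G : Fin l → ℝ) (lam : Fin l → ℝ) : ℝ := ∑ i, lam i * G i

/-- `y(λ) = ∑ᵢ λᵢ yᵢ` in the scalar case. -/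
noncomputable def ys {l : ℕ} (y : Fin l → ℝ) (lam : Fin l → ℝ) : ℝ := ∑ i, lam i * y i

/-- Right-hand side of `d/dt m` in the scalar moment system, `C = E − m²`. -/
noncomputable def rhsM (γ g yv m E : ℝ) : ℝ := (E - m ^ 2) * g * γ⁻¹ * (yv - g * m)

/-- Right-hand side of `d/dt m_{λᵢ}`, `C = E − m²`, `C̄ᵢ = E_{λᵢ} − 2 m m_{λᵢ}`. -/
noncomputable def rhsMlam (γ g yv gi yi m E mli Eli : ℝ) : ℝ :=
  (Eli - 2 * m * mli) * g * γ⁻¹ * (yv - g * m)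
    + (E - m ^ 2) * gi * γ⁻¹ * (yv - g * m)
    + (E - m ^ 2) * g * γ⁻¹ * (yi - gi * m)
    - (E - m ^ 2) * g ^ 2 * γ⁻¹ * mli

/-- Right-hand side of `d/dt E` in the scalar moment system. -/
noncomputable def rhsE (γ g yv m E : ℝ) : ℝ :=
  2 * ((E - m ^ 2) * g * γ⁻¹ * (yv * m - g * E))

/-- Right-hand side of `d/dt E_{λᵢ}` in the scalar moment system. -/
noncomputable def rhsElam (γ g yv gi yi m E mli Eli : ℝ) : ℝ :=
  2 * ((E - m ^ 2) * g * γ⁻¹ * (yv * mli - g * Eli)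
    + (Eli - 2 * m * mli) * g * γ⁻¹ * (yv * m - g * E)
    + (E - m ^ 2) * gi * γ⁻¹ * (yv * m - g * E)
    + (E - m ^ 2) * g * γ⁻¹ * (yi * m - gi * E))

theorem moment_system_equilibria_1d
    {l : ℕ} (hl : 1 ≤ l) (G : Fin l → ℝ) (y : Fin l → ℝ)
    (γ : ℝ) (hγ : 0 < γ) (lam : Fin l → ℝ) (hg : Gs G lam ≠ 0)
    (m E : ℝ) (mlam Elam : Fin l → ℝ) :
    (rhsM γ (Gs G lam) (ys y lam) m E = 0 ∧
     rhsE γ (Gs G lam) (ys y lam) m E = 0 ∧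
     (∀ i, rhsMlam γ (Gs G lam) (ys y lam) (G i) (y i) m E (mlam i) (Elam i) = 0) ∧
     (∀ i, rhsElam γ (Gs G lam) (ys y lam) (G i) (y i) m E (mlam i) (Elam i) = 0))
    ↔ ((Gs G lam * m = ys y lam ∧ Gs G lam ^ 2 * E = ys y lam ^ 2)
        ∨ (E = m ^ 2 ∧ ∀ i, Elam i = 2 * m * mlam i)) := by
  set g := Gs G lam with hgdef
  set yv := ys y lam with hydef
  have hγ0 : γ ≠ 0 := ne_of_gt hγ
  have hγi : γ⁻¹ ≠ 0 := inv_ne_zero hγ0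
  constructor
  · rintro ⟨h1, h2, h3, h4⟩
    unfold rhsM at h1
    unfold rhsE at h2
    have hCr : (E - m ^ 2) * (yv - g * m) = 0 := by
      have h : (E - m ^ 2) * (yv - g * m) * (g * γ⁻¹) = 0 := by
        rw [← h1]; ring
      rcases mul_eq_zero.mp h with h | h
      · exact h
      · exact absurd h (mul_ne_zero hg hγi)
    have hCe : (E - m ^ 2) * (yv * m - g * E) = 0 := by
      have h : (E - m ^ 2) * (yv * m - g * E) * (2 * (g * γ⁻¹)) = 0 := by
        rw [← h2]; ring
      rcases mul_eq_zero.mp h with h | h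
      · exact h
      · exact absurd h (by positivity)
    have hC : E = m ^ 2 := by
      by_contra hC
      have hC' : E - m ^ 2 ≠ 0 := sub_ne_zero.mpr hC
      have hr : yv - g * m = 0 := by
        rcases mul_eq_zero.mp hCr with h | h
        · exact absurd h hC'
        · exact h
      have he : yv * m - g * E = 0 := by
        rcases mul_eq_zero.mp hCe with h | h
        · exact absurd h hC'
        · exact h
      have hy : yv = g * m := by linarith
      apply hC
      have : g * (E - m ^ 2) = 0 := by rw [hy] at he; nlinarith
      rcases mul_eq_zero.mp this with h | h
      · exact absurd h hg
      · linarith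
    by_cases hr : yv - g * m = 0
    · left
      have hy : g * m = yv := by linarith
      refine ⟨hy, ?_⟩
      rw [hC, ← hy]; ring
    · right
      refine ⟨hC, fun i => ?_⟩
      have h := h3 i
      unfold rhsMlam at h
      rw [hC] at h
      have h' : (Elam i - 2 * m * mlam i) * (yv - g * m) * (g * γ⁻¹) = 0 := by
        rw [← h]; ring
      rcases mul_eq_zero.mp h' with h'' | h''
      · rcases mul_eq_zero.mp h'' with h3' | h3'
        · linarith [sub_eq_zero.mp h3']
        · exact absurd h3' hr
      · exact absurd h'' (mul_ne_zero hg hγi)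
  · rintro (⟨ha1, ha2⟩ | ⟨hb1, hb2⟩)
    · have hE : E = m ^ 2 := by
        have h : g ^ 2 * (E - m ^ 2) = 0 := by
          have : g ^ 2 * m ^ 2 = yv ^ 2 := by rw [← ha1]; ring
          nlinarith
        rcases mul_eq_zero.mp h with h | h
        · exact absurd h (pow_ne_zero 2 hg)
        · linarith
      have hy : yv = g * m := ha1.symm
      refine ⟨?_, ?_, fun i => ?_, fun i => ?_⟩ <;>
        simp only [rhsM, rhsE, rhsMlam, rhsElam, hE, hy] <;> ring
    · refine ⟨?_, ?_, fun i => ?_, fun i => ?_⟩ <;>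
        simp only [rhsM, rhsE, rhsMlam, rhsElam, hb1, hb2] <;> ring
end

section
/- Let d = k = 1 and let O ⊆ ℝ^l be an open set on which G(λ) ≠ 0. Define u*(λ) := y(λ)/G(λ) on O. Then u* is differentiable on O with ∂_{λ_i} u*(λ) = (y_i − G_i u*(λ)) / G(λ) for each i (equivalently, G_i u*(λ) = −G(λ) ∂_{λ_i} u*(λ) + y_i), and for every λ ∈ O the point given by m = u*(λ), E = u*(λ)², m_{λ_i} = ∂_{λ_i} u*(λ), E_{λ_i} = 2 u*(λ) ∂_{λ_i} u*(λ) is an equilibrium of the moment system at λ; that is, the Dirac point at the exact solution u*(λ) of the weighted problem, together with its λ-sensitivities, is a stationary state of the moment system. -/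
/-!
In the scalar case `d = k = 1`, on an open set `O` where `G(λ) ≠ 0`, the exact solution
`u*(λ) = y(λ)/G(λ)` of the weighted problem is differentiable with
`∂_{λᵢ} u* = (yᵢ − Gᵢ u*)/G(λ)`, and the point `m = u*`, `E = (u*)²`,
`m_{λᵢ} = ∂_{λᵢ} u*`, `E_{λᵢ} = 2 u* ∂_{λᵢ} u*` is an equilibrium of the moment system:
the Dirac state at the exact solution, with its λ-sensitivities, is stationary.
-/

open Function

/-- The exact solution `u*(λ) = y(λ)/G(λ)` of the weighted problem. -/
noncomputable def ustar {l : ℕ} (G y : Fin l → ℝ) (lam : Fin l → ℝ) : ℝ :=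
  ys y lam / Gs G lam

/-! Every right-hand side of the moment system carries a factor `C = E − m²` or
`C̄ᵢ = E_{λᵢ} − 2 m m_{λᵢ}`, and both vanish at a Dirac state with the sensitivities
`E_{λᵢ} = ∂_{λᵢ}(m²)`; so stationarity is pure algebra, and the only analysis is the
quotient rule for `u* = y(λ)/G(λ)`, a quotient of two linear forms. -/

theorem ContinuousLinearMap.hasFDerivAt_div {𝕜 E : Type*} [NontriviallyNormedField 𝕜]
    [NormedAddCommGroup E] [NormedSpace 𝕜 E] (p q : E →L[𝕜] 𝕜) {x : E} (hx : q x ≠ 0) :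
    HasFDerivAt (fun v => p v / q v) ((q x)⁻¹ • (p - (p x / q x) • q)) x := by
  have hmul : HasFDerivAt (fun v => p v * (q v)⁻¹) _ x :=
    p.hasFDerivAt.fun_mul ((hasFDerivAt_inv hx).comp x q.hasFDerivAt)
  simp only [div_eq_mul_inv]
  refine hmul.congr_fderiv (ContinuousLinearMap.ext fun v => ?_)
  simp only [add_apply, smul_apply, sub_apply, ContinuousLinearMap.comp_apply,
    ContinuousLinearMap.toSpanSingleton_apply, smul_eq_mul]
  field_simp
  ring

section DotProduct

variable {𝕜 ι : Type*} [NontriviallyNormedField 𝕜] [Fintype ι]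

noncomputable def dotProductCLM (c : ι → 𝕜) : (ι → 𝕜) →L[𝕜] 𝕜 :=
  ∑ i, c i • ContinuousLinearMap.proj i

theorem dotProductCLM_apply (c v : ι → 𝕜) : dotProductCLM c v = v ⬝ᵥ c := by
  simp [dotProductCLM, dotProduct, mul_comm]

end DotProduct

section ExactSolution

variable {l : ℕ} (G y : Fin l → ℝ) {lam : Fin l → ℝ}

theorem Gs_eq_dotProductCLM : Gs G = dotProductCLM G := by
  ext v
  simp only [Gs, dotProductCLM_apply, dotProduct]

theorem ys_eq_dotProductCLM : ys y = dotProductCLM y := by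
  ext v
  simp only [ys, dotProductCLM_apply, dotProduct]

theorem hasFDerivAt_ustar (hG : Gs G lam ≠ 0) :
    HasFDerivAt (ustar G y)
      ((Gs G lam)⁻¹ • (dotProductCLM y - ustar G y lam • dotProductCLM G)) lam := by
  have h := (dotProductCLM y).hasFDerivAt_div (dotProductCLM G) (x := lam)
    (by rwa [← Gs_eq_dotProductCLM])
  rwa [← Gs_eq_dotProductCLM, ← ys_eq_dotProductCLM] at h

theorem fderiv_ustar_single (hG : Gs G lam ≠ 0) (i : Fin l) :
    fderiv ℝ (ustar G y) lam (Pi.single i 1) = (y i - G i * ustar G y lam) / Gs G lam := by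
  rw [(hasFDerivAt_ustar G y hG).fderiv]
  simp [dotProductCLM_apply, div_eq_inv_mul, mul_comm]

end ExactSolution

section DiracState

variable (γ g yv gi yi m mli : ℝ)

theorem rhsM_dirac : rhsM γ g yv m (m ^ 2) = 0 := by simp [rhsM]

theorem rhsE_dirac : rhsE γ g yv m (m ^ 2) = 0 := by simp [rhsE]

theorem rhsMlam_dirac : rhsMlam γ g yv gi yi m (m ^ 2) mli (2 * m * mli) = 0 := by
  simp [rhsMlam]

theorem rhsElam_dirac : rhsElam γ g yv gi yi m (m ^ 2) mli (2 * m * mli) = 0 := by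
  simp [rhsElam]

end DiracState

theorem dirac_at_exact_solution_is_stationary_1d_general
    {l : ℕ} (G : Fin l → ℝ) (y : Fin l → ℝ)
    (γ : ℝ)
    (O : Set (Fin l → ℝ)) (hg : ∀ lam ∈ O, Gs G lam ≠ 0) :
    ∀ lam ∈ O,
      -- `u*` is differentiable at `lam` …
      DifferentiableAt ℝ (ustar G y) lam ∧
      -- … with partial derivatives `∂_{λᵢ} u* = (yᵢ − Gᵢ u*)/G(λ)`
      (∀ i : Fin l,
        fderiv ℝ (ustar G y) lam (Pi.single i 1)
          = (y i - G i * ustar G y lam) / Gs G lam) ∧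
      -- equivalently, `Gᵢ u* = −G(λ) ∂_{λᵢ} u* + yᵢ`
      (∀ i : Fin l,
        G i * ustar G y lam
          = -(Gs G lam * fderiv ℝ (ustar G y) lam (Pi.single i 1)) + y i) ∧
      -- and `(m, E, m_{λᵢ}, E_{λᵢ}) = (u*, (u*)², ∂_{λᵢ}u*, 2 u* ∂_{λᵢ}u*)` is an
      -- equilibrium of the moment system at `lam`
      (rhsM γ (Gs G lam) (ys y lam) (ustar G y lam) (ustar G y lam ^ 2) = 0 ∧
       rhsE γ (Gs G lam) (ys y lam) (ustar G y lam) (ustar G y lam ^ 2) = 0 ∧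
       (∀ i, rhsMlam γ (Gs G lam) (ys y lam) (G i) (y i)
          (ustar G y lam) (ustar G y lam ^ 2)
          (fderiv ℝ (ustar G y) lam (Pi.single i 1))
          (2 * ustar G y lam * fderiv ℝ (ustar G y) lam (Pi.single i 1)) = 0) ∧
       (∀ i, rhsElam γ (Gs G lam) (ys y lam) (G i) (y i)
          (ustar G y lam) (ustar G y lam ^ 2)
          (fderiv ℝ (ustar G y) lam (Pi.single i 1))
          (2 * ustar G y lam * fderiv ℝ (ustar G y) lam (Pi.single i 1)) = 0)) := by
  intro lam hlam
  have hG := hg lam hlam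
  have hpartial := fderiv_ustar_single G y hG
  refine ⟨(hasFDerivAt_ustar G y hG).differentiableAt, hpartial, fun i => ?_,
    rhsM_dirac .., rhsE_dirac .., fun i => rhsMlam_dirac .., fun i => rhsElam_dirac ..⟩
  rw [hpartial i, mul_div_cancel₀ _ hG]
  ring

theorem dirac_at_exact_solution_is_stationary_1d
    {l : ℕ} (hl : 1 ≤ l) (G : Fin l → ℝ) (y : Fin l → ℝ)
    (γ : ℝ) (hγ : 0 < γ)
    (O : Set (Fin l → ℝ)) (hO : IsOpen O) (hg : ∀ lam ∈ O, Gs G lam ≠ 0) :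
    ∀ lam ∈ O,
      -- `u*` is differentiable at `lam` …
      DifferentiableAt ℝ (ustar G y) lam ∧
      -- … with partial derivatives `∂_{λᵢ} u* = (yᵢ − Gᵢ u*)/G(λ)`
      (∀ i : Fin l,
        fderiv ℝ (ustar G y) lam (Pi.single i 1)
          = (y i - G i * ustar G y lam) / Gs G lam) ∧
      -- equivalently, `Gᵢ u* = −G(λ) ∂_{λᵢ} u* + yᵢ`
      (∀ i : Fin l,
        G i * ustar G y lam
          = -(Gs G lam * fderiv ℝ (ustar G y) lam (Pi.single i 1)) + y i) ∧
      -- and `(m, E, m_{λᵢ}, E_{λᵢ}) = (u*, (u*)², ∂_{λᵢ}u*, 2 u* ∂_{λᵢ}u*)` is an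
      -- equilibrium of the moment system at `lam`
      (rhsM γ (Gs G lam) (ys y lam) (ustar G y lam) (ustar G y lam ^ 2) = 0 ∧
       rhsE γ (Gs G lam) (ys y lam) (ustar G y lam) (ustar G y lam ^ 2) = 0 ∧
       (∀ i, rhsMlam γ (Gs G lam) (ys y lam) (G i) (y i)
          (ustar G y lam) (ustar G y lam ^ 2)
          (fderiv ℝ (ustar G y) lam (Pi.single i 1))
          (2 * ustar G y lam * fderiv ℝ (ustar G y) lam (Pi.single i 1)) = 0) ∧
       (∀ i, rhsElam γ (Gs G lam) (ys y lam) (G i) (y i)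
          (ustar G y lam) (ustar G y lam ^ 2)
          (fderiv ℝ (ustar G y) lam (Pi.single i 1))
          (2 * ustar G y lam * fderiv ℝ (ustar G y) lam (Pi.single i 1)) = 0)) :=
  dirac_at_exact_solution_is_stationary_1d_general G y γ O hg
end
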